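/- arXiv:1707.05036 — 3 statements merged into one kernel-verified Lean document; each statement's English description precedes it below -/
import Mathlib

section
/- Let n ≥ 4, let W be an algebraic Weyl tensor on ℝ^n, let S be a trace-free symmetric n×n real matrix, and let λ be a real number. Then |−∑_{i,j,k,l} W_{ijkl} S_{jl} S_{ik} + λ ∑_{i,j,k} S_{ij}S_{jk}S_{ki}| ≤ √((n−2)/(2(n−1))) · (|W|² + (2(n−2)λ²/n)·|S|²)^{1/2} · |S|². (This is the pointwise estimate of Lemma 2.3, valid at every point of every Riemannian manifold with W the Weyl curvature and S the traceless Ricci tensor.) -/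
open Finset

namespace WeylEst
variable {n : ℕ}

def dd (n : ℕ) (i j : Fin n) : ℝ := if i = j then 1 else 0

lemma sum4_sep (u v : Fin n → Fin n → ℝ) :
    ∑ i, ∑ j, ∑ k, ∑ l, u i k * v j l
      = (∑ i, ∑ k, u i k) * (∑ j, ∑ l, v j l) := by
  rw [Finset.sum_mul_sum]
  refine Finset.sum_congr rfl fun i _ => ?_
  refine Finset.sum_congr rfl fun j _ => ?_
  rw [Finset.sum_mul_sum]

lemma sum4_swap (F : Fin n → Fin n → Fin n → Fin n → ℝ) :
    ∑ i, ∑ j, ∑ k, ∑ l, F i j k l = ∑ k, ∑ l, ∑ i, ∑ j, F i j k l := by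
  have h1 : ∀ i : Fin n, ∑ j, ∑ k, ∑ l, F i j k l = ∑ k, ∑ j, ∑ l, F i j k l :=
    fun i => Finset.sum_comm
  simp_rw [h1]
  rw [Finset.sum_comm]
  refine Finset.sum_congr rfl fun k _ => ?_
  have h2 : ∀ i : Fin n, ∑ j, ∑ l, F i j k l = ∑ l, ∑ j, F i j k l :=
    fun i => Finset.sum_comm
  simp_rw [h2]
  exact Finset.sum_comm

lemma sum4_tr (a b c d : Fin n → Fin n → ℝ) :
    ∑ i, ∑ j, ∑ k, ∑ l, a i k * b j l * c i l * d j k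
      = ∑ k, ∑ l, (∑ i, a i k * c i l) * (∑ j, b j l * d j k) := by
  rw [sum4_swap]
  refine Finset.sum_congr rfl fun k _ => Finset.sum_congr rfl fun l _ => ?_
  rw [Finset.sum_mul_sum]
  refine Finset.sum_congr rfl fun i _ => Finset.sum_congr rfl fun j _ => ?_
  ring

def HH (S G : Fin n → Fin n → ℝ) (i j k l : Fin n) : ℝ :=
  S i k * S j l + G i k * dd n j l + dd n i k * G j l

-- basic dd sums
lemma sum_dd_sq : ∑ i : Fin n, ∑ k : Fin n, dd n i k * dd n i k = (n : ℝ) := by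
  simp [dd]

lemma sum_mul_dd (f : Fin n → Fin n → ℝ) : ∑ i : Fin n, ∑ k : Fin n, f i k * dd n i k
    = ∑ i, f i i := by
  simp [dd]

lemma sum_dd_mul (f : Fin n → Fin n → ℝ) : ∑ i : Fin n, ∑ k : Fin n, dd n i k * f i k
    = ∑ i, f i i := by
  simp [dd]

lemma sumH2 (S G : Fin n → Fin n → ℝ) (hS : ∑ i, S i i = 0) :
    ∑ i, ∑ j, ∑ k, ∑ l, (HH S G i j k l) ^ 2
      = (∑ i, ∑ k, S i k ^ 2) ^ 2 + 2 * n * (∑ i, ∑ k, (G i k) ^ 2)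
        + 2 * (∑ i, G i i) ^ 2 := by
  have expand : ∀ i j k l : Fin n, (HH S G i j k l) ^ 2 =
      (S i k * S i k) * (S j l * S j l)
      + (G i k * G i k) * (dd n j l * dd n j l)
      + (dd n i k * dd n i k) * (G j l * G j l)
      + ((S i k * G i k) * (S j l * dd n j l)
      + ((G i k * S i k) * (dd n j l * S j l)
      + ((S i k * dd n i k) * (S j l * G j l)
      + ((dd n i k * S i k) * (G j l * S j l)
      + ((G i k * dd n i k) * (dd n j l * G j l)
      + (dd n i k * G i k) * (G j l * dd n j l)))))) := by
    intro i j k l; unfold HH; ring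
  simp_rw [expand]
  simp_rw [Finset.sum_add_distrib]
  simp_rw [sum4_sep]
  simp_rw [← pow_two]
  have e0 : ∑ x : Fin n, ∑ y : Fin n, dd n x y ^ 2 = (n : ℝ) := by simp [dd]
  have eS1 : ∑ x : Fin n, ∑ y : Fin n, S x y * dd n x y = 0 := by simpa [dd] using hS
  have eS2 : ∑ x : Fin n, ∑ y : Fin n, dd n x y * S x y = 0 := by simpa [dd] using hS
  have eG1 : ∑ x : Fin n, ∑ y : Fin n, G x y * dd n x y = ∑ i, G i i := by simp [dd]
  have eG2 : ∑ x : Fin n, ∑ y : Fin n, dd n x y * G x y = ∑ i, G i i := by simp [dd]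
  rw [e0, eS1, eS2, eG1, eG2]
  ring

lemma sumHH' (S G : Fin n → Fin n → ℝ) :
    ∑ i, ∑ j, ∑ k, ∑ l, HH S G i j k l * HH S G i j l k
      = (∑ k, ∑ l, (∑ i, S i k * S i l) ^ 2)
        + 4 * (∑ k, ∑ l, S k l * (∑ i, S i k * G i l))
        + 4 * (∑ i, ∑ k, G i k ^ 2) := by
  have expand : ∀ i j k l : Fin n, HH S G i j k l * HH S G i j l k =
      S i k * S j l * S i l * S j k
      + (S i k * S j l * G i l * dd n j k
      + (S i k * S j l * dd n i l * G j k
      + (G i k * dd n j l * S i l * S j k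
      + (G i k * dd n j l * G i l * dd n j k
      + (G i k * dd n j l * dd n i l * G j k
      + (dd n i k * G j l * S i l * S j k
      + (dd n i k * G j l * G i l * dd n j k
      + dd n i k * G j l * dd n i l * G j k))))))) := by
    intro i j k l; unfold HH; ring
  simp_rw [expand]
  simp_rw [Finset.sum_add_distrib]
  simp_rw [sum4_tr]
  simp [dd]
  have hb : ∑ x : Fin n, ∑ i : Fin n, G i x * G i x = ∑ i : Fin n, ∑ k : Fin n, G i k ^ 2 := by
    rw [Finset.sum_comm]; simp_rw [← pow_two]
  have hb2 : ∑ x : Fin n, ∑ y : Fin n, G x y * G x y = ∑ i : Fin n, ∑ k : Fin n, G i k ^ 2 := by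
    simp_rw [← pow_two]
  have h11 : ∑ k : Fin n, ∑ l : Fin n, (∑ i : Fin n, S i k * S i l) * ∑ j : Fin n, S j l * S j k
      = ∑ k : Fin n, ∑ l : Fin n, (∑ i : Fin n, S i k * S i l) ^ 2 := by
    refine Finset.sum_congr rfl fun k _ => Finset.sum_congr rfl fun l _ => ?_
    rw [pow_two]
    congr 1
    exact Finset.sum_congr rfl fun j _ => mul_comm _ _
  have h12 : ∑ x : Fin n, ∑ y : Fin n, (∑ i : Fin n, S i x * G i y) * S x y
      = ∑ k : Fin n, ∑ l : Fin n, S k l * (∑ i : Fin n, S i k * G i l) := by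
    refine Finset.sum_congr rfl fun k _ => Finset.sum_congr rfl fun l _ => mul_comm _ _
  have h13 : ∑ x : Fin n, ∑ y : Fin n, S y x * (∑ j : Fin n, S j y * G j x)
      = ∑ k : Fin n, ∑ l : Fin n, S k l * (∑ i : Fin n, S i k * G i l) := by
    rw [Finset.sum_comm]
  have h21 : ∑ x : Fin n, ∑ y : Fin n, (∑ i : Fin n, G i x * S i y) * S y x
      = ∑ k : Fin n, ∑ l : Fin n, S k l * (∑ i : Fin n, S i k * G i l) := by
    rw [Finset.sum_comm]
    refine Finset.sum_congr rfl fun k _ => Finset.sum_congr rfl fun l _ => ?_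
    rw [mul_comm]
    congr 1
    exact Finset.sum_congr rfl fun i _ => mul_comm _ _
  have h31 : ∑ x : Fin n, ∑ y : Fin n, S x y * (∑ j : Fin n, G j y * S j x)
      = ∑ k : Fin n, ∑ l : Fin n, S k l * (∑ i : Fin n, S i k * G i l) := by
    refine Finset.sum_congr rfl fun k _ => Finset.sum_congr rfl fun l _ => ?_
    congr 1
    exact Finset.sum_congr rfl fun i _ => mul_comm _ _
  rw [h11, h12, h13, h21, h31, hb, hb2]
  ring

lemma sumX2 (S G : Fin n → Fin n → ℝ) (hS : ∑ i, S i i = 0) :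
    ∑ i, ∑ j, ∑ k, ∑ l, (HH S G i j k l - HH S G i j l k) ^ 2
      = 2 * ((∑ i, ∑ k, S i k ^ 2) ^ 2 + 2 * n * (∑ i, ∑ k, (G i k) ^ 2)
          + 2 * (∑ i, G i i) ^ 2)
        - 2 * ((∑ k, ∑ l, (∑ i, S i k * S i l) ^ 2)
          + 4 * (∑ k, ∑ l, S k l * (∑ i, S i k * G i l))
          + 4 * (∑ i, ∑ k, G i k ^ 2)) := by
  have e : ∀ i j k l : Fin n, (HH S G i j k l - HH S G i j l k) ^ 2
      = (HH S G i j k l ^ 2 + HH S G i j l k ^ 2)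
        - 2 * (HH S G i j k l * HH S G i j l k) := by
    intro i j k l; ring
  simp_rw [e, Finset.sum_sub_distrib, Finset.sum_add_distrib, ← Finset.mul_sum]
  have swap : ∑ i, ∑ j, ∑ k, ∑ l, HH S G i j l k ^ 2
      = ∑ i, ∑ j, ∑ k, ∑ l, HH S G i j k l ^ 2 := by
    exact Finset.sum_congr rfl fun i _ => Finset.sum_congr rfl fun j _ => Finset.sum_comm
  rw [swap, sumH2 S G hS, sumHH' S G]
  ring

lemma sumWX (W : Fin n → Fin n → Fin n → Fin n → ℝ) (S G : Fin n → Fin n → ℝ)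
    (hW2 : ∀ i j k l, W i j k l = - W i j l k)
    (hWtr : ∀ k l, ∑ i, W i k i l = 0)
    (hWtr2 : ∀ i k, ∑ j, W i j k j = 0) :
    ∑ i, ∑ j, ∑ k, ∑ l, W i j k l * (HH S G i j k l - HH S G i j l k)
      = 2 * ∑ i, ∑ j, ∑ k, ∑ l, W i j k l * (S i k * S j l) := by
  have e : ∀ i j k l : Fin n, W i j k l * (HH S G i j k l - HH S G i j l k)
      = W i j k l * HH S G i j k l - W i j k l * HH S G i j l k := by
    intro i j k l; ring
  simp_rw [e, Finset.sum_sub_distrib]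
  have swap : ∑ i, ∑ j, ∑ k, ∑ l, W i j k l * HH S G i j l k
      = ∑ i, ∑ j, ∑ k, ∑ l, W i j l k * HH S G i j k l := by
    exact Finset.sum_congr rfl fun i _ => Finset.sum_congr rfl fun j _ => Finset.sum_comm
  have neg : ∑ i, ∑ j, ∑ k, ∑ l, W i j l k * HH S G i j k l
      = - ∑ i, ∑ j, ∑ k, ∑ l, W i j k l * HH S G i j k l := by
    simp_rw [← Finset.sum_neg_distrib]
    refine Finset.sum_congr rfl fun i _ => Finset.sum_congr rfl fun j _ =>
      Finset.sum_congr rfl fun k _ => Finset.sum_congr rfl fun l _ => ?_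
    rw [hW2 i j l k]; ring
  rw [swap, neg]
  have main : ∑ i, ∑ j, ∑ k, ∑ l, W i j k l * HH S G i j k l
      = ∑ i, ∑ j, ∑ k, ∑ l, W i j k l * (S i k * S j l) := by
    have e2 : ∀ i j k l : Fin n, W i j k l * HH S G i j k l
        = W i j k l * (S i k * S j l) + (W i j k l * (G i k * dd n j l)
          + W i j k l * (dd n i k * G j l)) := by
      intro i j k l; unfold HH; ring
    simp_rw [e2, Finset.sum_add_distrib]
    have t1 : ∑ i, ∑ j, ∑ k, ∑ l, W i j k l * (G i k * dd n j l) = 0 := by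
      have inner : ∀ i j k : Fin n, ∑ l, W i j k l * (G i k * dd n j l)
          = W i j k j * G i k := by
        intro i j k; simp [dd]
      simp_rw [inner]
      have inner2 : ∀ i : Fin n, ∑ j, ∑ k, W i j k j * G i k = 0 := by
        intro i
        rw [Finset.sum_comm]
        refine Finset.sum_eq_zero fun k _ => ?_
        rw [← Finset.sum_mul, hWtr2 i k, zero_mul]
      simp_rw [inner2, Finset.sum_const_zero]
    have t2 : ∑ i, ∑ j, ∑ k, ∑ l, W i j k l * (dd n i k * G j l) = 0 := by
      have inner : ∀ i j : Fin n, ∑ k, ∑ l, W i j k l * (dd n i k * G j l)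
          = ∑ l, W i j i l * G j l := by
        intro i j
        have : ∀ k : Fin n, ∑ l, W i j k l * (dd n i k * G j l)
            = dd n i k * ∑ l, W i j k l * G j l := by
          intro k; rw [Finset.mul_sum]; exact Finset.sum_congr rfl fun l _ => by ring
        simp_rw [this]
        simp [dd]
      simp_rw [inner]
      rw [Finset.sum_comm]
      refine Finset.sum_eq_zero fun j _ => ?_
      rw [Finset.sum_comm]
      refine Finset.sum_eq_zero fun l _ => ?_
      rw [← Finset.sum_mul, hWtr j l, zero_mul]
    rw [t1, t2]; ring
  rw [main]; ring

lemma cyc3 (g : Fin n → Fin n → Fin n → ℝ) :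
    ∑ b, ∑ c, ∑ d, g b c d = ∑ b, ∑ c, ∑ d, g d b c := by
  have h1 : ∑ b : Fin n, ∑ c : Fin n, ∑ d : Fin n, g b c d
      = ∑ c : Fin n, ∑ b : Fin n, ∑ d : Fin n, g b c d := Finset.sum_comm
  have h2 : ∑ c : Fin n, ∑ b : Fin n, ∑ d : Fin n, g b c d
      = ∑ c : Fin n, ∑ d : Fin n, ∑ b : Fin n, g b c d :=
    Finset.sum_congr rfl fun c _ => Finset.sum_comm
  rw [h1, h2]

lemma sum4_perm (f : Fin n → Fin n → Fin n → Fin n → ℝ) :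
    ∑ a, ∑ b, ∑ c, ∑ d, f a b c d = ∑ a, ∑ b, ∑ c, ∑ d, f a c d b := by
  refine Finset.sum_congr rfl fun a _ => ?_
  rw [cyc3 (fun b c d => f a b c d), cyc3 (fun b c d => f a d b c)]

lemma quarticId (S : Fin n → Fin n → ℝ) (hSsymm : ∀ i j, S i j = S j i) :
    ∑ a, ∑ b, ∑ c, ∑ d, S a b * S c a * S d c * S d b
      = ∑ a, ∑ b, ∑ c, ∑ d, (S c a * S c b) * (S d a * S d b) := by
  rw [sum4_perm (fun a b c d => S a b * S c a * S d c * S d b)]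
  refine Finset.sum_congr rfl fun a _ => Finset.sum_congr rfl fun b _ =>
    Finset.sum_congr rfl fun c _ => Finset.sum_congr rfl fun d _ => ?_
  rw [hSsymm a c, hSsymm b d, hSsymm b c]
  ring

lemma t3Q (S : Fin n → Fin n → ℝ) (hSsymm : ∀ i j, S i j = S j i) :
    ∑ i, ∑ j, ∑ k, S i j * S j k * S k i
      = ∑ k, ∑ l, S k l * ∑ i, S i k * S i l := by
  refine Finset.sum_congr rfl fun k _ => Finset.sum_congr rfl fun l _ => ?_
  rw [Finset.mul_sum]
  refine Finset.sum_congr rfl fun i _ => ?_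
  rw [hSsymm l i]
  ring

lemma cs2 (f g : Fin n → Fin n → ℝ) :
    (∑ i, ∑ j, f i j * g i j) ^ 2 ≤ (∑ i, ∑ j, f i j ^ 2) * (∑ i, ∑ j, g i j ^ 2) := by
  have := Finset.sum_mul_sq_le_sq_mul_sq Finset.univ
    (fun p : Fin n × Fin n => f p.1 p.2) (fun p => g p.1 p.2)
  simpa [Fintype.sum_prod_type] using this

lemma cs4 (f g : Fin n → Fin n → Fin n → Fin n → ℝ) :
    (∑ i, ∑ j, ∑ k, ∑ l, f i j k l * g i j k l) ^ 2
      ≤ (∑ i, ∑ j, ∑ k, ∑ l, f i j k l ^ 2) * (∑ i, ∑ j, ∑ k, ∑ l, g i j k l ^ 2) := by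
  have := Finset.sum_mul_sq_le_sq_mul_sq Finset.univ
    (fun p : Fin n × Fin n × Fin n × Fin n => f p.1 p.2.1 p.2.2.1 p.2.2.2)
    (fun p => g p.1 p.2.1 p.2.2.1 p.2.2.2)
  simpa [Fintype.sum_prod_type] using this

lemma sqrt_cs (a b c d : ℝ) (ha : 0 ≤ a) (hb : 0 ≤ b) (hc : 0 ≤ c) (hd : 0 ≤ d) :
    Real.sqrt a * Real.sqrt b + Real.sqrt c * Real.sqrt d
      ≤ Real.sqrt (a + c) * Real.sqrt (b + d) := by
  have h1 : 0 ≤ Real.sqrt a * Real.sqrt b + Real.sqrt c * Real.sqrt d := by positivity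
  have h2 := Real.sq_sqrt ha
  have h3 := Real.sq_sqrt hb
  have h4 := Real.sq_sqrt hc
  have h5 := Real.sq_sqrt hd
  have key : (Real.sqrt a * Real.sqrt b + Real.sqrt c * Real.sqrt d) ^ 2 ≤ (a + c) * (b + d) := by
    nlinarith [sq_nonneg (Real.sqrt a * Real.sqrt d - Real.sqrt c * Real.sqrt b)]
  calc Real.sqrt a * Real.sqrt b + Real.sqrt c * Real.sqrt d
      = Real.sqrt ((Real.sqrt a * Real.sqrt b + Real.sqrt c * Real.sqrt d) ^ 2) :=
        (Real.sqrt_sq h1).symm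
    _ ≤ Real.sqrt ((a + c) * (b + d)) := Real.sqrt_le_sqrt key
    _ = Real.sqrt (a + c) * Real.sqrt (b + d) := Real.sqrt_mul (by linarith) _

noncomputable def cc1 (n : ℕ) : ℝ := 1 / ((n : ℝ) - 2)

noncomputable def cc2 (n : ℕ) (S : Fin n → Fin n → ℝ) : ℝ :=
  -(∑ a, ∑ b, S a b ^ 2) / (2 * ((n : ℝ) - 1) * ((n : ℝ) - 2))

noncomputable def Gm (n : ℕ) (S : Fin n → Fin n → ℝ) : Fin n → Fin n → ℝ := fun i j =>
  cc1 n * (∑ m, S m i * S m j) + cc2 n S * dd n i j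

end WeylEst


set_option maxHeartbeats 2000000 in
open WeylEst in
/-- **Lemma 2.3 (pointwise estimate).** For an algebraic Weyl tensor `W` on `ℝⁿ`
(`n ≥ 4`), a trace-free symmetric matrix `S`, and `λ ∈ ℝ`:
`|−∑ W_{ijkl} S_{jl} S_{ik} + λ ∑ S_{ij}S_{jk}S_{ki}|
  ≤ √((n−2)/(2(n−1))) · (|W|² + (2(n−2)λ²/n)|S|²)^{1/2} · |S|²`. -/
theorem weyl_traceless_ricci_cubic_estimate
    (n : ℕ) (hn : 4 ≤ n)
    (W : Fin n → Fin n → Fin n → Fin n → ℝ)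
    (S : Fin n → Fin n → ℝ) (lam : ℝ)
    (hW1 : ∀ i j k l, W i j k l = - W j i k l)
    (hW2 : ∀ i j k l, W i j k l = - W i j l k)
    (hW3 : ∀ i j k l, W i j k l = W k l i j)
    (hWB : ∀ i j k l, W i j k l + W i k l j + W i l j k = 0)
    (hWtr : ∀ k l, ∑ i, W i k i l = 0)
    (hSsymm : ∀ i j, S i j = S j i)
    (hStr : ∑ i, S i i = 0) :
    |-(∑ i, ∑ j, ∑ k, ∑ l, W i j k l * S j l * S i k)
        + lam * ∑ i, ∑ j, ∑ k, S i j * S j k * S k i|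
      ≤ Real.sqrt ((n - 2 : ℝ) / (2 * (n - 1)))
          * Real.sqrt ((∑ i, ∑ j, ∑ k, ∑ l, (W i j k l) ^ 2)
              + (2 * (n - 2 : ℝ) * lam ^ 2 / n) * ∑ i, ∑ j, (S i j) ^ 2)
          * ∑ i, ∑ j, (S i j) ^ 2 := by
  have hN4 : (4:ℝ) ≤ (n:ℝ) := by exact_mod_cast hn
  have hN0 : (0:ℝ) < (n:ℝ) := by linarith
  have hN1 : (0:ℝ) < (n:ℝ) - 1 := by linarith
  have hN2 : (0:ℝ) < (n:ℝ) - 2 := by linarith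
  have hWtr2 : ∀ i k, ∑ j, W i j k j = 0 := by
    intro i k
    have e : ∀ j, W i j k j = W j i j k := fun j => by
      rw [hW1 i j k j, hW2 j i k j]; ring
    simp_rw [e]
    exact hWtr i k
  have hσ0 : (0:ℝ) ≤ ∑ i, ∑ j, S i j ^ 2 :=
    Finset.sum_nonneg fun i _ => Finset.sum_nonneg fun j _ => sq_nonneg _
  have hw0 : (0:ℝ) ≤ ∑ i, ∑ j, ∑ k, ∑ l, W i j k l ^ 2 :=
    Finset.sum_nonneg fun i _ => Finset.sum_nonneg fun j _ =>
      Finset.sum_nonneg fun k _ => Finset.sum_nonneg fun l _ => sq_nonneg _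
  have htrQ : (∑ k : Fin n, ∑ m : Fin n, S m k * S m k) = ∑ i, ∑ j, S i j ^ 2 := by
    rw [Finset.sum_comm]
    exact Finset.sum_congr rfl fun i _ => Finset.sum_congr rfl fun j _ => (pow_two (S i j)).symm
  have hQdd : ∑ k : Fin n, ∑ l : Fin n, (∑ m, S m k * S m l) * dd n k l
      = ∑ i, ∑ j, S i j ^ 2 := by
    simpa [dd] using htrQ
  have hdd2 : ∑ k : Fin n, ∑ l : Fin n, dd n k l ^ 2 = (n:ℝ) := by simp [dd]
  have hddtr : ∑ i : Fin n, dd n i i = (n:ℝ) := by simp [dd]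
  have hSdd : ∑ k : Fin n, ∑ l : Fin n, S k l * dd n k l = 0 := by simpa [dd] using hStr
  -- E-tensor norm identity and nonnegativity
  have hEexp : ∑ k, ∑ l, ((∑ m, S m k * S m l)
        - (∑ i, ∑ j, S i j ^ 2) / (n:ℝ) * dd n k l) ^ 2
      = (∑ k, ∑ l, (∑ m, S m k * S m l) ^ 2)
        - (∑ i, ∑ j, S i j ^ 2) ^ 2 / (n:ℝ) := by
    have e : ∀ k l : Fin n, ((∑ m, S m k * S m l)
          - (∑ i, ∑ j, S i j ^ 2) / (n:ℝ) * dd n k l) ^ 2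
        = (∑ m, S m k * S m l) ^ 2
          - (2 * ((∑ i, ∑ j, S i j ^ 2) / (n:ℝ))) * ((∑ m, S m k * S m l) * dd n k l)
          + ((∑ i, ∑ j, S i j ^ 2) / (n:ℝ)) ^ 2 * dd n k l ^ 2 := by
      intro k l; ring
    simp_rw [e, Finset.sum_add_distrib, Finset.sum_sub_distrib, ← Finset.mul_sum]
    rw [hQdd, hdd2]
    field_simp
    ring
  have hfp0 : (0:ℝ) ≤ (∑ k, ∑ l, (∑ m, S m k * S m l) ^ 2)
      - (∑ i, ∑ j, S i j ^ 2) ^ 2 / (n:ℝ) := by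
    rw [← hEexp]
    exact Finset.sum_nonneg fun k _ => Finset.sum_nonneg fun l _ => sq_nonneg _
  -- t3 as inner product with E, and its Cauchy-Schwarz bound
  have ht3E : (∑ i, ∑ j, ∑ k, S i j * S j k * S k i)
      = ∑ k, ∑ l, S k l * ((∑ m, S m k * S m l)
          - (∑ i, ∑ j, S i j ^ 2) / (n:ℝ) * dd n k l) := by
    rw [t3Q S hSsymm]
    have e : ∀ k l : Fin n, S k l * ((∑ m, S m k * S m l)
          - (∑ i, ∑ j, S i j ^ 2) / (n:ℝ) * dd n k l)
        = S k l * (∑ m, S m k * S m l)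
          - ((∑ i, ∑ j, S i j ^ 2) / (n:ℝ)) * (S k l * dd n k l) := by
      intro k l; ring
    simp_rw [e, Finset.sum_sub_distrib, ← Finset.mul_sum]
    rw [hSdd]
    ring
  have ht3sq : (∑ i, ∑ j, ∑ k, S i j * S j k * S k i) ^ 2
      ≤ (∑ i, ∑ j, S i j ^ 2) * ((∑ k, ∑ l, (∑ m, S m k * S m l) ^ 2)
          - (∑ i, ∑ j, S i j ^ 2) ^ 2 / (n:ℝ)) := by
    rw [ht3E, ← hEexp]
    exact cs2 S (fun k l => (∑ m, S m k * S m l)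
      - (∑ i, ∑ j, S i j ^ 2) / (n:ℝ) * dd n k l)
  -- quartic identity
  have hqgA : (∑ k, ∑ l, S k l * ∑ i, S i k * ∑ m, S m i * S m l)
      = ∑ k, ∑ l, (∑ m, S m k * S m l) ^ 2 := by
    have lflat : (∑ k, ∑ l, S k l * ∑ i, S i k * ∑ m, S m i * S m l)
        = ∑ k, ∑ l, ∑ i, ∑ m, S k l * S i k * S m i * S m l := by
      refine Finset.sum_congr rfl fun k _ => Finset.sum_congr rfl fun l _ => ?_
      rw [Finset.mul_sum]
      refine Finset.sum_congr rfl fun i _ => ?_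
      rw [show S k l * (S i k * ∑ m, S m i * S m l)
          = (S k l * S i k) * ∑ m, S m i * S m l by ring, Finset.mul_sum]
      exact Finset.sum_congr rfl fun m _ => by ring
    rw [lflat, quarticId S hSsymm]
    refine Finset.sum_congr rfl fun a _ => Finset.sum_congr rfl fun b _ => ?_
    rw [pow_two, Finset.sum_mul_sum]
  have hS2 : (∑ k : Fin n, ∑ l : Fin n, S k l * S l k) = ∑ i, ∑ j, S i j ^ 2 := by
    refine Finset.sum_congr rfl fun k _ => Finset.sum_congr rfl fun l _ => ?_
    rw [hSsymm l k]; ring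
  -- inner product of S-column with Gm
  have einner : ∀ k l : Fin n, (∑ i, S i k * Gm n S i l)
      = cc1 n * (∑ i, S i k * ∑ m, S m i * S m l) + cc2 n S * S l k := by
    intro k l
    have e : ∀ i : Fin n, S i k * Gm n S i l
        = cc1 n * (S i k * ∑ m, S m i * S m l) + cc2 n S * (S i k * dd n i l) := by
      intro i; simp only [Gm]; ring
    simp_rw [e, Finset.sum_add_distrib, ← Finset.mul_sum]
    have : (∑ i, S i k * dd n i l) = S l k := by simp [dd]
    rw [this]
  have hqg : (∑ k, ∑ l, S k l * ∑ i, S i k * Gm n S i l)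
      = cc1 n * (∑ k, ∑ l, (∑ m, S m k * S m l) ^ 2)
        + cc2 n S * (∑ i, ∑ j, S i j ^ 2) := by
    simp_rw [einner]
    have e : ∀ k l : Fin n,
        S k l * (cc1 n * (∑ i, S i k * ∑ m, S m i * S m l) + cc2 n S * S l k)
        = cc1 n * (S k l * ∑ i, S i k * ∑ m, S m i * S m l)
          + cc2 n S * (S k l * S l k) := by
      intro k l; ring
    simp_rw [e, Finset.sum_add_distrib, ← Finset.mul_sum]
    rw [hqgA, hS2]
  have hb : (∑ i, ∑ k, Gm n S i k ^ 2)
      = cc1 n ^ 2 * (∑ k, ∑ l, (∑ m, S m k * S m l) ^ 2)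
        + 2 * (cc1 n * cc2 n S) * (∑ i, ∑ j, S i j ^ 2)
        + cc2 n S ^ 2 * (n : ℝ) := by
    have e : ∀ i k : Fin n, Gm n S i k ^ 2
        = cc1 n ^ 2 * (∑ m, S m i * S m k) ^ 2
          + 2 * (cc1 n * cc2 n S) * ((∑ m, S m i * S m k) * dd n i k)
          + cc2 n S ^ 2 * dd n i k ^ 2 := by
      intro i k; simp only [Gm]; ring
    simp_rw [e, Finset.sum_add_distrib, ← Finset.mul_sum]
    rw [hQdd, hdd2]
  have htG : (∑ i, Gm n S i i) = cc1 n * (∑ i, ∑ j, S i j ^ 2) + cc2 n S * (n : ℝ) := by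
    have e : ∀ i : Fin n, Gm n S i i
        = cc1 n * (∑ m, S m i * S m i) + cc2 n S * dd n i i := by
      intro i; simp only [Gm]
    simp_rw [e]
    rw [Finset.sum_add_distrib, ← Finset.mul_sum, ← Finset.mul_sum, htrQ, hddtr]
  -- the squared norm of the Weyl-type tensor X
  have hx2 := sumX2 S (Gm n S) hStr
  rw [hb, htG, hqg] at hx2
  have hx2val : (∑ i, ∑ j, ∑ k, ∑ l,
        (HH S (Gm n S) i j k l - HH S (Gm n S) i j l k) ^ 2)
      = 2 * ((n:ℝ) - 2) / ((n:ℝ) - 1) * (∑ i, ∑ j, S i j ^ 2) ^ 2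
        - 2 * (n:ℝ) / ((n:ℝ) - 2) * ((∑ k, ∑ l, (∑ m, S m k * S m l) ^ 2)
            - (∑ i, ∑ j, S i j ^ 2) ^ 2 / (n:ℝ)) := by
    rw [hx2]
    simp only [cc1, cc2]
    field_simp
    ring
  have hx20 : (0:ℝ) ≤ ∑ i, ∑ j, ∑ k, ∑ l,
      (HH S (Gm n S) i j k l - HH S (Gm n S) i j l k) ^ 2 :=
    Finset.sum_nonneg fun i _ => Finset.sum_nonneg fun j _ =>
      Finset.sum_nonneg fun k _ => Finset.sum_nonneg fun l _ => sq_nonneg _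
  -- contraction of W with X
  have hWX := sumWX W S (Gm n S) hW2 hWtr hWtr2
  have hPP : (∑ i, ∑ j, ∑ k, ∑ l, W i j k l * (S i k * S j l))
      = ∑ i, ∑ j, ∑ k, ∑ l, W i j k l * S j l * S i k := by
    refine Finset.sum_congr rfl fun i _ => Finset.sum_congr rfl fun j _ =>
      Finset.sum_congr rfl fun k _ => Finset.sum_congr rfl fun l _ => by ring
  rw [hPP] at hWX
  have hcs : (∑ i, ∑ j, ∑ k, ∑ l, W i j k l
        * (HH S (Gm n S) i j k l - HH S (Gm n S) i j l k)) ^ 2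
      ≤ (∑ i, ∑ j, ∑ k, ∑ l, W i j k l ^ 2)
        * ∑ i, ∑ j, ∑ k, ∑ l, (HH S (Gm n S) i j k l - HH S (Gm n S) i j l k) ^ 2 :=
    cs4 W (fun i j k l => HH S (Gm n S) i j k l - HH S (Gm n S) i j l k)
  rw [hWX] at hcs
  -- abbreviations (opaque)
  obtain ⟨σ, hσ⟩ : ∃ x : ℝ, (∑ i, ∑ j, S i j ^ 2) = x := ⟨_, rfl⟩
  obtain ⟨w, hw⟩ : ∃ x : ℝ, (∑ i, ∑ j, ∑ k, ∑ l, W i j k l ^ 2) = x := ⟨_, rfl⟩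
  obtain ⟨f, hf⟩ : ∃ x : ℝ, (∑ k, ∑ l, (∑ m, S m k * S m l) ^ 2) = x := ⟨_, rfl⟩
  obtain ⟨P, hP⟩ : ∃ x : ℝ, (∑ i, ∑ j, ∑ k, ∑ l, W i j k l * S j l * S i k) = x := ⟨_, rfl⟩
  obtain ⟨t3, ht3⟩ : ∃ x : ℝ, (∑ i, ∑ j, ∑ k, S i j * S j k * S k i) = x := ⟨_, rfl⟩
  obtain ⟨x2, hx2o⟩ : ∃ x : ℝ, (∑ i, ∑ j, ∑ k, ∑ l,
      (HH S (Gm n S) i j k l - HH S (Gm n S) i j l k) ^ 2) = x := ⟨_, rfl⟩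
  rw [hσ] at hσ0 hfp0 ht3sq hx2val ⊢
  rw [hw] at hw0 hcs ⊢
  rw [hf] at hfp0 ht3sq hx2val
  rw [hP] at hcs ⊢
  rw [ht3] at ht3sq ⊢
  rw [hx2o] at hx2val hx20 hcs
  obtain ⟨fp, hfp⟩ : ∃ x : ℝ, f - σ ^ 2 / (n:ℝ) = x := ⟨_, rfl⟩
  rw [hfp] at hfp0 ht3sq hx2val
  obtain ⟨K1, hK1⟩ : ∃ x : ℝ, 2 * ((n:ℝ) - 2) / ((n:ℝ) - 1) = x := ⟨_, rfl⟩
  rw [hK1] at hx2val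
  obtain ⟨K2, hK2⟩ : ∃ x : ℝ, 2 * (n:ℝ) / ((n:ℝ) - 2) = x := ⟨_, rfl⟩
  rw [hK2] at hx2val
  obtain ⟨K3, hK3⟩ : ∃ x : ℝ, 2 * ((n:ℝ) - 2) * lam ^ 2 / (n:ℝ) = x := ⟨_, rfl⟩
  rw [hK3]
  have hK10 : (0:ℝ) ≤ K1 := by rw [← hK1]; positivity
  have hK30 : (0:ℝ) ≤ K3 * σ := by
    have h : (0:ℝ) ≤ K3 := by rw [← hK3]; positivity
    exact mul_nonneg h hσ0
  have hK20 : (0:ℝ) ≤ K2 * fp := by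
    have h : (0:ℝ) ≤ K2 := by rw [← hK2]; positivity
    exact mul_nonneg h hfp0
  -- bound on |P|
  have hPb : |P| ≤ Real.sqrt w * Real.sqrt x2 / 2 := by
    have h1 : (2 * |P|) ^ 2 ≤ w * x2 := by
      calc (2 * |P|) ^ 2 = (2 * P) ^ 2 := by rw [mul_pow, mul_pow, sq_abs]
        _ ≤ w * x2 := hcs
    have h2 : 2 * |P| ≤ Real.sqrt (w * x2) := by
      have h3 := Real.sqrt_le_sqrt h1
      rwa [Real.sqrt_sq (by positivity)] at h3
    rw [Real.sqrt_mul hw0] at h2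
    linarith
  -- bound on |t3|
  have ht3b : |t3| ≤ Real.sqrt σ * Real.sqrt fp := by
    have h1 : |t3| ^ 2 ≤ σ * fp := by rw [sq_abs]; exact ht3sq
    have h2 := Real.sqrt_le_sqrt h1
    rwa [Real.sqrt_sq (abs_nonneg _), Real.sqrt_mul hσ0] at h2
  -- cross-term equality
  have hcross : |lam| * (Real.sqrt σ * Real.sqrt fp)
      = Real.sqrt (K3 * σ) * Real.sqrt (K2 * fp) / 2 := by
    have e1 : K3 * σ * (K2 * fp) = 4 * (lam ^ 2 * (σ * fp)) := by
      rw [← hK3, ← hK2]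
      field_simp
      ring
    rw [← Real.sqrt_mul hK30, e1]
    rw [show (4:ℝ) * (lam ^ 2 * (σ * fp)) = (2:ℝ) ^ 2 * (lam ^ 2 * (σ * fp)) by norm_num]
    rw [Real.sqrt_mul (by positivity : (0:ℝ) ≤ (2:ℝ) ^ 2), Real.sqrt_sq (by norm_num : (0:ℝ) ≤ 2)]
    rw [Real.sqrt_mul (sq_nonneg lam), Real.sqrt_sq_eq_abs]
    rw [Real.sqrt_mul hσ0]
    ring
  -- the main estimate
  have hmain : |P| + |lam| * |t3|
      ≤ (Real.sqrt w * Real.sqrt x2 + Real.sqrt (K3 * σ) * Real.sqrt (K2 * fp)) / 2 := by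
    have h1 : |lam| * |t3| ≤ |lam| * (Real.sqrt σ * Real.sqrt fp) :=
      mul_le_mul_of_nonneg_left ht3b (abs_nonneg lam)
    rw [hcross] at h1
    linarith
  have hcs2 : Real.sqrt w * Real.sqrt x2 + Real.sqrt (K3 * σ) * Real.sqrt (K2 * fp)
      ≤ Real.sqrt (w + K3 * σ) * Real.sqrt (x2 + K2 * fp) :=
    sqrt_cs w x2 (K3 * σ) (K2 * fp) hw0 hx20 hK30 hK20
  have hsum : x2 + K2 * fp = K1 * σ ^ 2 := by rw [hx2val]; ring
  have hfin : Real.sqrt (x2 + K2 * fp) = Real.sqrt K1 * σ := by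
    rw [hsum, Real.sqrt_mul hK10, Real.sqrt_sq hσ0]
  have hconst : Real.sqrt (((n:ℝ) - 2) / (2 * ((n:ℝ) - 1))) = Real.sqrt K1 / 2 := by
    have e : ((n:ℝ) - 2) / (2 * ((n:ℝ) - 1)) = (Real.sqrt K1 / 2) ^ 2 := by
      rw [div_pow, Real.sq_sqrt hK10, ← hK1]
      field_simp
    rw [e, Real.sqrt_sq (by positivity)]
  calc |(-P) + lam * t3| ≤ |(-P)| + |lam * t3| := abs_add_le _ _
    _ = |P| + |lam| * |t3| := by rw [abs_neg, abs_mul]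
    _ ≤ (Real.sqrt w * Real.sqrt x2 + Real.sqrt (K3 * σ) * Real.sqrt (K2 * fp)) / 2 := hmain
    _ ≤ Real.sqrt (w + K3 * σ) * Real.sqrt (x2 + K2 * fp) / 2 := by linarith
    _ = Real.sqrt (w + K3 * σ) * (Real.sqrt K1 * σ) / 2 := by rw [hfin]
    _ = (Real.sqrt K1 / 2) * Real.sqrt (w + K3 * σ) * σ := by ring
    _ = Real.sqrt (((n:ℝ) - 2) / (2 * ((n:ℝ) - 1))) * Real.sqrt (w + K3 * σ) * σ := by
        rw [hconst]
end

section
/- (Okumura's lemma, used in the proof of Lemma 2.3.) Let n ≥ 2 and let S be a trace-free symmetric n×n real matrix. Then |tr(S³)| = |∑_{i,j,k} S_{ij}S_{jk}S_{ki}| ≤ ((n−2)/√(n(n−1)))·|S|³. -/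
/-!
Diagonalising `S` reduces the claim to its eigenvalues `x : Fin n → ℝ`, which satisfy
`∑ xᵢ = 0`, `∑ xᵢ² = |S|²` and `∑ xᵢ³ = tr S³`. Cauchy–Schwarz on the other `n - 1` entries gives
`xᵢ ≥ -(n - 1) t` with `t = |S| / √(n(n - 1))`, and summing the nonnegative terms
`(xᵢ + (n - 1) t)(xᵢ - t)²` yields `∑ xᵢ³ ≥ -(n - 2) t |S|²`. Applying this to `-x` too
bounds `|∑ xᵢ³|`; equality holds when `n - 1` eigenvalues equal `t`.
-/

open Finset

namespace Matrix.IsHermitian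

variable {n 𝕜 : Type*} [Fintype n] [DecidableEq n] [RCLike 𝕜] {A : Matrix n n 𝕜}

lemma trace_pow_eq_sum_eigenvalues_pow (hA : A.IsHermitian) (k : ℕ) :
    (A ^ k).trace = ∑ i, (hA.eigenvalues i : 𝕜) ^ k := by
  conv_lhs => rw [hA.spectral_theorem, ← map_pow, Unitary.conjStarAlgAut_apply, trace_mul_cycle,
    Unitary.coe_star_mul_self, one_mul, diagonal_pow, trace_diagonal]
  simp

end Matrix.IsHermitian

section SumZero

variable {ι : Type*} [Fintype ι] {x : ι → ℝ}

lemma card_mul_sq_le_of_sum_eq_zero (hx : ∑ i, x i = 0) (i : ι) :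
    Fintype.card ι * x i ^ 2 ≤ (Fintype.card ι - 1) * ∑ j, x j ^ 2 := by
  classical
  have hcs : (∑ j ∈ univ.erase i, x j) ^ 2 ≤ #(univ.erase i) * ∑ j ∈ univ.erase i, x j ^ 2 :=
    sq_sum_le_card_mul_sum_sq
  rw [sum_erase_eq_sub (mem_univ i), sum_erase_eq_sub (mem_univ i), hx,
    card_erase_of_mem (mem_univ i), card_univ,
    Nat.cast_sub (Fintype.card_pos_iff.mpr ⟨i⟩)] at hcs
  push_cast at hcs
  nlinarith

lemma sum_cube_ge_of_sum_eq_zero (hx : ∑ i, x i = 0) {t : ℝ}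
    (hlow : ∀ i, -((Fintype.card ι - 1) * t) ≤ x i) :
    -((Fintype.card ι - 3) * t * ∑ i, x i ^ 2 + Fintype.card ι * (Fintype.card ι - 1) * t ^ 3)
      ≤ ∑ i, x i ^ 3 := by
  have hnonneg : 0 ≤ ∑ i, (x i + (Fintype.card ι - 1) * t) * (x i - t) ^ 2 :=
    sum_nonneg fun i _ => mul_nonneg (by linarith [hlow i]) (sq_nonneg _)
  have hexpand : ∑ i, (x i + (Fintype.card ι - 1) * t) * (x i - t) ^ 2
      = ∑ i, x i ^ 3 + (Fintype.card ι - 3) * t * ∑ i, x i ^ 2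
        + (3 - 2 * Fintype.card ι) * t ^ 2 * ∑ i, x i
        + Fintype.card ι * ((Fintype.card ι - 1) * t ^ 3) := by
    simp only [mul_sum, ← sum_add_distrib, ← card_univ, ← nsmul_eq_mul, ← sum_const]
    exact sum_congr rfl fun i _ => by ring
  rw [hexpand, hx] at hnonneg
  linarith

lemma neg_le_sum_cube_of_sum_eq_zero (hι : 2 ≤ Fintype.card ι) (hx : ∑ i, x i = 0) :
    -((Fintype.card ι - 2) / √(Fintype.card ι * (Fintype.card ι - 1)) * √(∑ i, x i ^ 2) ^ 3)
      ≤ ∑ i, x i ^ 3 := by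
  set N : ℝ := (Fintype.card ι : ℝ)
  set σ := ∑ i, x i ^ 2
  have hN : (2 : ℝ) ≤ N := Nat.ofNat_le_cast.mpr hι
  have hN1 : N - 1 ≠ 0 := by linarith
  have hσ : 0 ≤ σ := sum_nonneg fun i _ => sq_nonneg (x i)
  set t := √σ / √(N * (N - 1))
  have ht : 0 ≤ t := by positivity
  have hNt : N * (N - 1) * t ^ 2 = σ := by
    rw [div_pow, Real.sq_sqrt hσ, Real.sq_sqrt (by nlinarith)]
    field_simp
  have hlow : ∀ i, -((N - 1) * t) ≤ x i := fun i => by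
    refine (abs_le_of_sq_le_sq' ?_ (by nlinarith)).1
    nlinarith [card_mul_sq_le_of_sum_eq_zero hx i]
  have hcube := sum_cube_ge_of_sum_eq_zero hx hlow
  have hrhs : (N - 2) / √(N * (N - 1)) * √σ ^ 3 = (N - 2) * t * σ := by
    rw [pow_succ, Real.sq_sqrt hσ]; ring
  rw [hrhs]
  nlinarith

lemma abs_sum_cube_le_of_sum_eq_zero (hι : 2 ≤ Fintype.card ι) (hx : ∑ i, x i = 0) :
    |∑ i, x i ^ 3|
      ≤ (Fintype.card ι - 2) / √(Fintype.card ι * (Fintype.card ι - 1)) * √(∑ i, x i ^ 2) ^ 3 := by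
  have hneg := neg_le_sum_cube_of_sum_eq_zero hι (x := -x) (by simp [hx])
  simp only [Pi.neg_apply, neg_sq, Odd.neg_pow (by decide : Odd 3), sum_neg_distrib] at hneg
  exact abs_le.2 ⟨neg_le_sum_cube_of_sum_eq_zero hι hx, by linarith⟩

end SumZero

/-- **Okumura's lemma.** For a trace-free symmetric `n×n` real matrix `S` (`n ≥ 2`):
`|∑ S_{ij}S_{jk}S_{ki}| ≤ ((n−2)/√(n(n−1)))·|S|³`. -/
theorem okumura_lemma
    (n : ℕ) (hn : 2 ≤ n)
    (S : Fin n → Fin n → ℝ)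
    (hSsymm : ∀ i j, S i j = S j i)
    (hStr : ∑ i, S i i = 0) :
    |∑ i, ∑ j, ∑ k, S i j * S j k * S k i|
      ≤ ((n - 2 : ℝ) / Real.sqrt (n * (n - 1)))
          * (Real.sqrt (∑ i, ∑ j, (S i j) ^ 2)) ^ 3 := by
  set A := Matrix.of S
  have hA : A.IsHermitian := Matrix.IsHermitian.ext fun i j => by simp [A, hSsymm i j]
  have htrace (k : ℕ) : (A ^ k).trace = ∑ i, hA.eigenvalues i ^ k := by
    simpa using hA.trace_pow_eq_sum_eigenvalues_pow k
  have h1 : ∑ i, hA.eigenvalues i = 0 := by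
    simpa [Matrix.trace, A, hStr] using (htrace 1).symm
  have h2 : ∑ i, hA.eigenvalues i ^ 2 = ∑ i, ∑ j, S i j ^ 2 := by
    simpa [Matrix.trace, sq, Matrix.mul_apply, A, hSsymm] using (htrace 2).symm
  have h3 : ∑ i, hA.eigenvalues i ^ 3 = ∑ i, ∑ j, ∑ k, S i j * S j k * S k i := by
    rw [← htrace 3]
    simp only [Matrix.trace, Matrix.diag, pow_succ, pow_zero, one_mul, Matrix.mul_apply, A,
      Matrix.of_apply, sum_mul]
    exact sum_congr rfl fun i _ => sum_comm
  simpa [h2, h3] using abs_sum_cube_le_of_sum_eq_zero (by simpa using hn) h1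
end

section
/- (Huisken's estimate, the λ = 0 ingredient in the proof of Lemma 2.3.) Let n ≥ 4, let W be an algebraic Weyl tensor on ℝ^n, and let S be a trace-free symmetric n×n real matrix. Then |∑_{i,j,k,l} W_{ijkl} S_{ik} S_{jl}| ≤ √((n−2)/(2(n−1)))·|W|·|S|². -/
open Finset

namespace HuiskenAux

variable {n : ℕ}

/-- Kulkarni–Nomizu type tensor of a matrix `C` with the metric. -/
def KT (C : Fin n → Fin n → ℝ) (i j k l : Fin n) : ℝ :=
  (if i = k then C j l else 0) + (if j = l then C i k else 0)
    - (if i = l then C j k else 0) - (if j = k then C i l else 0)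

/-- The curvature tensor of the round metric. -/
def GT (n : ℕ) (i j k l : Fin n) : ℝ :=
  (if i = k then (1:ℝ) else 0) * (if j = l then 1 else 0)
    - (if i = l then (1:ℝ) else 0) * (if j = k then 1 else 0)

section Traces

variable (T : Fin n → Fin n → Fin n → Fin n → ℝ)
  (hT1 : ∀ i j k l, T i j k l = - T j i k l)
  (hT2 : ∀ i j k l, T i j k l = - T i j l k)
  (hT3 : ∀ i j k l, T i j k l = T k l i j)
  (hTtr : ∀ k l, ∑ i, T i k i l = 0)

include hT1 hT2 hT3 hTtr in
lemma tr24 : ∀ i k, ∑ j, T i j k j = 0 := by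
  intro i k
  have e : ∀ j, T i j k j = T j k j i := by
    intro j
    rw [hT3 i j k j, hT1 k j i j, hT2 j k i j, neg_neg]
  rw [Finset.sum_congr rfl fun j _ => e j]
  exact hTtr k i

include hT2 hTtr in
lemma tr14 : ∀ j k, ∑ i, T i j k i = 0 := by
  intro j k
  have e : ∀ i, T i j k i = -T i j i k := fun i => hT2 i j k i
  rw [Finset.sum_congr rfl fun i _ => e i]
  simp [hTtr j k]

include hT1 hTtr in
lemma tr23 : ∀ i l, ∑ j, T i j j l = 0 := by
  intro i l
  have e : ∀ j, T i j j l = -T j i j l := fun j => hT1 i j j l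
  rw [Finset.sum_congr rfl fun j _ => e j]
  simp [hTtr i l]

include hT1 hT2 hT3 hTtr in
lemma contract_KT (C : Fin n → Fin n → ℝ) :
    ∑ i, ∑ j, ∑ k, ∑ l, T i j k l * KT C i j k l = 0 := by
  have p1 : ∑ i, ∑ j, ∑ k, ∑ l, T i j k l * (if i = k then C j l else 0) = 0 := by
    simp only [mul_ite, mul_zero, Finset.sum_ite_irrel, Finset.sum_const_zero,
      Finset.sum_ite_eq, Finset.sum_ite_eq', Finset.mem_univ, if_true]
    rw [Finset.sum_comm]
    refine Finset.sum_eq_zero fun j _ => ?_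
    rw [Finset.sum_comm]
    refine Finset.sum_eq_zero fun l _ => ?_
    rw [← Finset.sum_mul, hTtr, zero_mul]
  have p2 : ∑ i, ∑ j, ∑ k, ∑ l, T i j k l * (if j = l then C i k else 0) = 0 := by
    simp only [mul_ite, mul_zero, Finset.sum_ite_irrel, Finset.sum_const_zero,
      Finset.sum_ite_eq, Finset.sum_ite_eq', Finset.mem_univ, if_true]
    refine Finset.sum_eq_zero fun i _ => ?_
    rw [Finset.sum_comm]
    refine Finset.sum_eq_zero fun k _ => ?_
    rw [← Finset.sum_mul, tr24 T hT1 hT2 hT3 hTtr, zero_mul]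
  have p3 : ∑ i, ∑ j, ∑ k, ∑ l, T i j k l * (if i = l then C j k else 0) = 0 := by
    simp only [mul_ite, mul_zero, Finset.sum_ite_irrel, Finset.sum_const_zero,
      Finset.sum_ite_eq, Finset.sum_ite_eq', Finset.mem_univ, if_true]
    rw [Finset.sum_comm]
    refine Finset.sum_eq_zero fun j _ => ?_
    rw [Finset.sum_comm]
    refine Finset.sum_eq_zero fun k _ => ?_
    rw [← Finset.sum_mul, tr14 T hT2 hTtr, zero_mul]
  have p4 : ∑ i, ∑ j, ∑ k, ∑ l, T i j k l * (if j = k then C i l else 0) = 0 := by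
    simp only [mul_ite, mul_zero, Finset.sum_ite_irrel, Finset.sum_const_zero,
      Finset.sum_ite_eq, Finset.sum_ite_eq', Finset.mem_univ, if_true]
    refine Finset.sum_eq_zero fun i _ => ?_
    rw [Finset.sum_comm]
    refine Finset.sum_eq_zero fun l _ => ?_
    rw [← Finset.sum_mul, tr23 T hT1 hTtr, zero_mul]
  calc ∑ i, ∑ j, ∑ k, ∑ l, T i j k l * KT C i j k l
      = (∑ i, ∑ j, ∑ k, ∑ l, T i j k l * (if i = k then C j l else 0))
        + (∑ i, ∑ j, ∑ k, ∑ l, T i j k l * (if j = l then C i k else 0))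
        - (∑ i, ∑ j, ∑ k, ∑ l, T i j k l * (if i = l then C j k else 0))
        - (∑ i, ∑ j, ∑ k, ∑ l, T i j k l * (if j = k then C i l else 0)) := by
        simp only [KT, mul_add, mul_sub, Finset.sum_add_distrib, Finset.sum_sub_distrib]
    _ = 0 := by rw [p1, p2, p3, p4]; ring

include hT2 hTtr in
lemma contract_GT :
    ∑ i, ∑ j, ∑ k, ∑ l, T i j k l * GT n i j k l = 0 := by
  simp only [GT, mul_sub, mul_ite, ite_mul, mul_one, one_mul, mul_zero, zero_mul,
    Finset.sum_ite_irrel, Finset.sum_const_zero, Finset.sum_ite_eq, Finset.sum_ite_eq',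
    Finset.mem_univ, if_true, Finset.sum_sub_distrib]
  have h1 : ∑ x : Fin n, ∑ y : Fin n, T x y x y = 0 := by
    rw [Finset.sum_comm]
    exact Finset.sum_eq_zero fun y _ => hTtr y y
  have h2 : ∑ x : Fin n, ∑ y : Fin n, T x y y x = 0 := by
    have e : ∀ x y : Fin n, T x y y x = -T x y x y := fun x y => hT2 x y y x
    calc ∑ x : Fin n, ∑ y : Fin n, T x y y x
        = ∑ x : Fin n, ∑ y : Fin n, -T x y x y :=
          Finset.sum_congr rfl fun x _ => Finset.sum_congr rfl fun y _ => e x y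
      _ = 0 := by
          simp only [Finset.sum_neg_distrib]
          rw [h1, neg_zero]
  rw [h1, h2, sub_zero]

end Traces

def Csq (S : Fin n → Fin n → ℝ) (i k : Fin n) : ℝ := ∑ m, S i m * S m k

section Smat
variable (S : Fin n → Fin n → ℝ) (hSsymm : ∀ i j, S i j = S j i)

include hSsymm in
lemma sumSS : ∀ a b, ∑ l, S a l * S b l = Csq S a b := by
  intro a b
  exact Finset.sum_congr rfl fun l _ => by rw [hSsymm b l]

include hSsymm in
lemma UU :
    ∑ i, ∑ j, ∑ k, ∑ l, (S i k * S j l - S i l * S j k) * (S i k * S j l - S i l * S j k)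
      = 2 * (∑ i, Csq S i i) * (∑ i, Csq S i i)
        - 2 * ∑ i, ∑ k, Csq S i k * Csq S i k := by
  have hl : ∀ i j k, ∑ l, (S i k * S j l - S i l * S j k) * (S i k * S j l - S i l * S j k)
      = S i k * S i k * Csq S j j - 2 * (S i k * S j k) * Csq S i j
        + S j k * S j k * Csq S i i := by
    intro i j k
    have e : ∀ l : Fin n, (S i k * S j l - S i l * S j k) * (S i k * S j l - S i l * S j k)
        = S i k * S i k * (S j l * S j l) - 2 * (S i k * S j k) * (S i l * S j l)
          + S j k * S j k * (S i l * S i l) := fun l => by ring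
    rw [Finset.sum_congr rfl fun l _ => e l, Finset.sum_add_distrib, Finset.sum_sub_distrib,
      ← Finset.mul_sum, ← Finset.mul_sum, ← Finset.mul_sum,
      sumSS S hSsymm j j, sumSS S hSsymm i j, sumSS S hSsymm i i]
  have hk : ∀ i j, ∑ k, (S i k * S i k * Csq S j j - 2 * (S i k * S j k) * Csq S i j
      + S j k * S j k * Csq S i i)
      = Csq S i i * Csq S j j - 2 * Csq S i j * Csq S i j + Csq S j j * Csq S i i := by
    intro i j
    rw [Finset.sum_add_distrib, Finset.sum_sub_distrib, ← Finset.sum_mul, ← Finset.sum_mul,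
      ← Finset.sum_mul, sumSS S hSsymm i i, sumSS S hSsymm j j]
    have : (∑ k, 2 * (S i k * S j k)) = 2 * Csq S i j := by
      rw [← Finset.mul_sum, sumSS S hSsymm i j]
    rw [this]
  calc ∑ i, ∑ j, ∑ k, ∑ l, (S i k * S j l - S i l * S j k) * (S i k * S j l - S i l * S j k)
      = ∑ i, ∑ j, (Csq S i i * Csq S j j - 2 * Csq S i j * Csq S i j
          + Csq S j j * Csq S i i) := by
        refine Finset.sum_congr rfl fun i _ => Finset.sum_congr rfl fun j _ => ?_
        rw [Finset.sum_congr rfl fun k _ => hl i j k, hk i j]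
    _ = 2 * (∑ i, Csq S i i) * (∑ i, Csq S i i)
        - 2 * ∑ i, ∑ k, Csq S i k * Csq S i k := by
        simp only [Finset.sum_add_distrib, Finset.sum_sub_distrib, mul_assoc,
          ← Finset.mul_sum, ← Finset.sum_mul]
        ring
  
end Smat

variable (S : Fin n → Fin n → ℝ) (hSsymm : ∀ i j, S i j = S j i) (hStr : ∑ i, S i i = 0)

include hStr in
lemma shape1 :
    ∑ x : Fin n, ∑ y : Fin n, ∑ z : Fin n, (S x x * S y z - S x z * S y x) * Csq S y z
      = - ∑ i, ∑ k, Csq S i k * Csq S i k := by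
  have e : ∀ x y z : Fin n, (S x x * S y z - S x z * S y x) * Csq S y z
      = S x x * (S y z * Csq S y z) - S y x * S x z * Csq S y z := fun x y z => by ring
  rw [Finset.sum_congr rfl fun x _ => Finset.sum_congr rfl fun y _ =>
    Finset.sum_congr rfl fun z _ => e x y z]
  simp only [Finset.sum_sub_distrib]
  have A : ∑ x : Fin n, ∑ y : Fin n, ∑ z : Fin n, S x x * (S y z * Csq S y z) = 0 := by
    simp only [← Finset.mul_sum, ← Finset.sum_mul, hStr, zero_mul]
  have B : ∑ x : Fin n, ∑ y : Fin n, ∑ z : Fin n, S y x * S x z * Csq S y z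
      = ∑ i, ∑ k, Csq S i k * Csq S i k := by
    rw [Finset.sum_comm]
    refine Finset.sum_congr rfl fun y _ => ?_
    rw [Finset.sum_comm]
    refine Finset.sum_congr rfl fun z _ => ?_
    rw [← Finset.sum_mul]
    rfl
  rw [A, B]; ring

include hStr in
lemma shape2 :
    ∑ x : Fin n, ∑ y : Fin n, ∑ z : Fin n, (S x z * S y y - S x y * S y z) * Csq S x z
      = - ∑ i, ∑ k, Csq S i k * Csq S i k := by
  have e : ∀ x y z : Fin n, (S x z * S y y - S x y * S y z) * Csq S x z
      = S y y * (S x z * Csq S x z) - S x y * S y z * Csq S x z := fun x y z => by ring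
  rw [Finset.sum_congr rfl fun x _ => Finset.sum_congr rfl fun y _ =>
    Finset.sum_congr rfl fun z _ => e x y z]
  simp only [Finset.sum_sub_distrib]
  have A : ∑ x : Fin n, ∑ y : Fin n, ∑ z : Fin n, S y y * (S x z * Csq S x z) = 0 := by
    simp only [← Finset.mul_sum, ← Finset.sum_mul, hStr, zero_mul, mul_zero,
      Finset.sum_const_zero]
  have B : ∑ x : Fin n, ∑ y : Fin n, ∑ z : Fin n, S x y * S y z * Csq S x z
      = ∑ i, ∑ k, Csq S i k * Csq S i k := by
    refine Finset.sum_congr rfl fun x _ => ?_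
    rw [Finset.sum_comm]
    refine Finset.sum_congr rfl fun z _ => ?_
    rw [← Finset.sum_mul]
    rfl
  rw [A, B]; ring

include hSsymm hStr in
lemma KU :
    ∑ i, ∑ j, ∑ k, ∑ l, (S i k * S j l - S i l * S j k) * KT (Csq S) i j k l
      = -4 * ∑ i, ∑ k, Csq S i k * Csq S i k := by
  have p1 : ∑ i, ∑ j, ∑ k, ∑ l,
      (S i k * S j l - S i l * S j k) * (if i = k then Csq S j l else 0)
      = - ∑ i, ∑ k, Csq S i k * Csq S i k := by
    simp only [mul_ite, ite_mul, mul_zero, zero_mul, Finset.sum_ite_irrel,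
      Finset.sum_const_zero, Finset.sum_ite_eq, Finset.sum_ite_eq', Finset.mem_univ, if_true]
    exact shape1 S hStr
  have p2 : ∑ i, ∑ j, ∑ k, ∑ l,
      (S i k * S j l - S i l * S j k) * (if j = l then Csq S i k else 0)
      = - ∑ i, ∑ k, Csq S i k * Csq S i k := by
    simp only [mul_ite, ite_mul, mul_zero, zero_mul, Finset.sum_ite_irrel,
      Finset.sum_const_zero, Finset.sum_ite_eq, Finset.sum_ite_eq', Finset.mem_univ, if_true]
    exact shape2 S hStr
  have p3 : ∑ i, ∑ j, ∑ k, ∑ l,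
      (S i k * S j l - S i l * S j k) * (if i = l then Csq S j k else 0)
      = ∑ i, ∑ k, Csq S i k * Csq S i k := by
    simp only [mul_ite, ite_mul, mul_zero, zero_mul, Finset.sum_ite_irrel,
      Finset.sum_const_zero, Finset.sum_ite_eq, Finset.sum_ite_eq', Finset.mem_univ, if_true]
    have e : ∀ x y z : Fin n, (S x z * S y x - S x x * S y z) * Csq S y z
        = -((S x x * S y z - S x z * S y x) * Csq S y z) := fun x y z => by ring
    rw [Finset.sum_congr rfl fun x _ => Finset.sum_congr rfl fun y _ =>
      Finset.sum_congr rfl fun z _ => e x y z]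
    simp only [Finset.sum_neg_distrib]
    rw [shape1 S hStr, neg_neg]
  have p4 : ∑ i, ∑ j, ∑ k, ∑ l,
      (S i k * S j l - S i l * S j k) * (if j = k then Csq S i l else 0)
      = ∑ i, ∑ k, Csq S i k * Csq S i k := by
    simp only [mul_ite, ite_mul, mul_zero, zero_mul, Finset.sum_ite_irrel,
      Finset.sum_const_zero, Finset.sum_ite_eq, Finset.sum_ite_eq', Finset.mem_univ, if_true]
    have e : ∀ x y z : Fin n, (S x y * S y z - S x z * S y y) * Csq S x z
        = -((S x z * S y y - S x y * S y z) * Csq S x z) := fun x y z => by ring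
    rw [Finset.sum_congr rfl fun x _ => Finset.sum_congr rfl fun y _ =>
      Finset.sum_congr rfl fun z _ => e x y z]
    simp only [Finset.sum_neg_distrib]
    rw [shape2 S hStr, neg_neg]
  calc ∑ i, ∑ j, ∑ k, ∑ l, (S i k * S j l - S i l * S j k) * KT (Csq S) i j k l
      = (∑ i, ∑ j, ∑ k, ∑ l,
          (S i k * S j l - S i l * S j k) * (if i = k then Csq S j l else 0))
        + (∑ i, ∑ j, ∑ k, ∑ l,
          (S i k * S j l - S i l * S j k) * (if j = l then Csq S i k else 0))
        - (∑ i, ∑ j, ∑ k, ∑ l,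
          (S i k * S j l - S i l * S j k) * (if i = l then Csq S j k else 0))
        - (∑ i, ∑ j, ∑ k, ∑ l,
          (S i k * S j l - S i l * S j k) * (if j = k then Csq S i l else 0)) := by
        simp only [KT, mul_add, mul_sub, Finset.sum_add_distrib, Finset.sum_sub_distrib]
    _ = -4 * ∑ i, ∑ k, Csq S i k * Csq S i k := by rw [p1, p2, p3, p4]; ring

include hSsymm hStr in
lemma GU :
    ∑ i, ∑ j, ∑ k, ∑ l, (S i k * S j l - S i l * S j k) * GT n i j k l
      = -2 * ∑ i, ∑ j, S i j * S i j := by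
  simp only [GT, mul_ite, ite_mul, mul_zero, zero_mul, mul_one, one_mul, mul_sub,
    Finset.sum_ite_irrel, Finset.sum_const_zero, Finset.sum_ite_eq, Finset.sum_ite_eq',
    Finset.mem_univ, if_true, Finset.sum_sub_distrib]
  have A : ∑ x : Fin n, ∑ y : Fin n, S x x * S y y = 0 := by
    simp only [← Finset.mul_sum, ← Finset.sum_mul, hStr, zero_mul]
  have B : ∑ x : Fin n, ∑ y : Fin n, S x y * S y x = ∑ i, ∑ j, S i j * S i j :=
    Finset.sum_congr rfl fun x _ => Finset.sum_congr rfl fun y _ => by rw [hSsymm y x]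
  rw [A, B]; ring

def Vt (S : Fin n → Fin n → ℝ) (a b : ℝ) (i j k l : Fin n) : ℝ :=
  (S i k * S j l - S i l * S j k) + a * KT (Csq S) i j k l - b * GT n i j k l

lemma Vt3 (S : Fin n → Fin n → ℝ) (hS : ∀ i j, S i j = S j i) (a b : ℝ) (i j k l : Fin n) :
    Vt S a b i j k l = Vt S a b k l i j := by
  have hC : ∀ p q, Csq S q p = Csq S p q := by
    intro p q
    exact Finset.sum_congr rfl fun m _ => by rw [hS q m, hS m p]; ring
  simp only [Vt, KT, GT]
  rw [hC j l, hC i k, hC j k, hC i l, hS k i, hS l j, hS k j, hS l i]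
  simp only [@eq_comm (Fin n) k i, @eq_comm (Fin n) l j, @eq_comm (Fin n) k j,
    @eq_comm (Fin n) l i]
  ring

lemma Vt_ricci (hn : 4 ≤ n) (S : Fin n → Fin n → ℝ) (hSsymm : ∀ i j, S i j = S j i)
    (hStr : ∑ i, S i i = 0) (k l : Fin n) :
    ∑ i, Vt S (1/((n:ℝ)-2)) ((∑ i, ∑ j, S i j * S i j)/(((n:ℝ)-1)*((n:ℝ)-2))) i k i l
      = 0 := by
  have hn2 : ((n:ℝ) - 2) ≠ 0 := by
    have : (4:ℝ) ≤ (n:ℝ) := by exact_mod_cast hn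
    nlinarith
  have hn1 : ((n:ℝ) - 1) ≠ 0 := by
    have : (4:ℝ) ≤ (n:ℝ) := by exact_mod_cast hn
    nlinarith
  have h1 : ∑ x : Fin n, S x l * S k x = Csq S k l :=
    Finset.sum_congr rfl fun x _ => by rw [mul_comm]
  have h2 : ∑ x : Fin n, Csq S x x = ∑ i, ∑ j, S i j * S i j :=
    Finset.sum_congr rfl fun x _ => Finset.sum_congr rfl fun m _ => by rw [hSsymm m x]
  set σ : ℝ := ∑ i, ∑ j, S i j * S i j with hσ
  simp only [Vt, KT, GT]
  simp only [mul_add, mul_sub, mul_ite, mul_zero, mul_one, ite_mul, zero_mul, one_mul,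
    eq_self_iff_true, if_true, Finset.sum_add_distrib, Finset.sum_sub_distrib,
    Finset.sum_ite_irrel, Finset.sum_const_zero, Finset.sum_ite_eq, Finset.sum_ite_eq',
    Finset.mem_univ, Finset.sum_const, Finset.card_univ, Fintype.card_fin, nsmul_eq_mul,
    ← Finset.mul_sum, ← Finset.sum_mul]
  have hd : ((n:ℝ) - 1) * ((n:ℝ) - 2) ≠ 0 := mul_ne_zero hn1 hn2
  have hd' : (2 - (n:ℝ) * 3 + (n:ℝ) ^ 2) ≠ 0 := by
    rwa [show (2 - (n:ℝ) * 3 + (n:ℝ) ^ 2) = ((n:ℝ) - 1) * ((n:ℝ) - 2) by ring]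
  rw [hStr, h1]
  by_cases hkl : k = l
  · subst hkl
    simp only [eq_self_iff_true, if_true]
    rw [h2]
    have hq2 : ((-2:ℝ) + (n:ℝ))⁻¹ * ((n:ℝ) - 2) = 1 := by
      rw [show ((-2:ℝ) + (n:ℝ)) = (n:ℝ) - 2 by ring]; exact inv_mul_cancel₀ hn2
    have hq : ((2:ℝ) - (n:ℝ)*3 + (n:ℝ)^2)⁻¹ * (((n:ℝ) - 1) * ((n:ℝ) - 2)) = 1 := by
      rw [show ((2:ℝ) - (n:ℝ)*3 + (n:ℝ)^2) = ((n:ℝ) - 1) * ((n:ℝ) - 2) by ring]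
      exact inv_mul_cancel₀ hd
    ring_nf
    linear_combination (Csq S k k + σ * ((n:ℝ) - 1) * ((2:ℝ) - (n:ℝ)*3 + (n:ℝ)^2)⁻¹) * hq2
      + (-(σ) * ((-2:ℝ) + (n:ℝ))⁻¹) * hq
  · simp only [if_neg hkl]
    have hq2 : ((-2:ℝ) + (n:ℝ))⁻¹ * ((n:ℝ) - 2) = 1 := by
      rw [show ((-2:ℝ) + (n:ℝ)) = (n:ℝ) - 2 by ring]; exact inv_mul_cancel₀ hn2
    ring_nf
    linear_combination (Csq S k l) * hq2

lemma WU (W : Fin n → Fin n → Fin n → Fin n → ℝ) (S : Fin n → Fin n → ℝ)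
    (hW2 : ∀ i j k l, W i j k l = - W i j l k) :
    ∑ i, ∑ j, ∑ k, ∑ l, W i j k l * (S i k * S j l - S i l * S j k)
      = 2 * ∑ i, ∑ j, ∑ k, ∑ l, W i j k l * S i k * S j l := by
  have swap : ∀ i j, ∑ k, ∑ l, W i j k l * (S i l * S j k)
      = - ∑ k, ∑ l, W i j k l * S i k * S j l := by
    intro i j
    rw [Finset.sum_comm]
    have e : ∀ a b, W i j b a * (S i a * S j b) = -(W i j a b * S i a * S j b) :=
      fun a b => by rw [hW2 i j a b]; ring
    calc ∑ a, ∑ b, W i j b a * (S i a * S j b)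
        = ∑ a, ∑ b, -(W i j a b * S i a * S j b) :=
          Finset.sum_congr rfl fun a _ => Finset.sum_congr rfl fun b _ => e a b
      _ = - ∑ a, ∑ b, W i j a b * S i a * S j b := by
          simp only [Finset.sum_neg_distrib]
  calc ∑ i, ∑ j, ∑ k, ∑ l, W i j k l * (S i k * S j l - S i l * S j k)
      = ∑ i, ∑ j, ((∑ k, ∑ l, W i j k l * S i k * S j l)
          - ∑ k, ∑ l, W i j k l * (S i l * S j k)) := by
        refine Finset.sum_congr rfl fun i _ => Finset.sum_congr rfl fun j _ => ?_
        rw [← Finset.sum_sub_distrib]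
        refine Finset.sum_congr rfl fun k _ => ?_
        rw [← Finset.sum_sub_distrib]
        exact Finset.sum_congr rfl fun l _ => by ring
    _ = ∑ i, ∑ j, (2 * ∑ k, ∑ l, W i j k l * S i k * S j l) := by
        refine Finset.sum_congr rfl fun i _ => Finset.sum_congr rfl fun j _ => ?_
        rw [swap i j]; ring
    _ = 2 * ∑ i, ∑ j, ∑ k, ∑ l, W i j k l * S i k * S j l := by
        simp only [← Finset.mul_sum]

lemma Vt1 (S : Fin n → Fin n → ℝ) (a b : ℝ) (i j k l : Fin n) :
    Vt S a b i j k l = - Vt S a b j i k l := by simp only [Vt, KT, GT]; ring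

lemma Vt2 (S : Fin n → Fin n → ℝ) (a b : ℝ) (i j k l : Fin n) :
    Vt S a b i j k l = - Vt S a b i j l k := by simp only [Vt, KT, GT]; ring

lemma trCsq (S : Fin n → Fin n → ℝ) (hSsymm : ∀ i j, S i j = S j i) :
    ∑ i, Csq S i i = ∑ i, ∑ j, S i j * S i j :=
  Finset.sum_congr rfl fun i _ => Finset.sum_congr rfl fun m _ => by rw [hSsymm m i]

lemma sum4_congr {f g : Fin n → Fin n → Fin n → Fin n → ℝ}
    (h : ∀ i j k l, f i j k l = g i j k l) :
    ∑ i, ∑ j, ∑ k, ∑ l, f i j k l = ∑ i, ∑ j, ∑ k, ∑ l, g i j k l :=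
  Finset.sum_congr rfl fun i _ => Finset.sum_congr rfl fun j _ =>
    Finset.sum_congr rfl fun k _ => Finset.sum_congr rfl fun l _ => h i j k l

lemma prod_sum_eq (F : Fin n → Fin n → Fin n → Fin n → ℝ) :
    ∑ p : Fin n × Fin n × Fin n × Fin n, F p.1 p.2.1 p.2.2.1 p.2.2.2
      = ∑ i, ∑ j, ∑ k, ∑ l, F i j k l := by
  rw [Fintype.sum_prod_type]
  refine Finset.sum_congr rfl fun i _ => ?_
  rw [Fintype.sum_prod_type]
  refine Finset.sum_congr rfl fun j _ => ?_
  rw [Fintype.sum_prod_type]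

end HuiskenAux

open HuiskenAux in
/-- **Huisken's estimate.** For an algebraic Weyl tensor `W` on `ℝⁿ` (`n ≥ 4`) and a
trace-free symmetric matrix `S`:
`|∑ W_{ijkl} S_{ik} S_{jl}| ≤ √((n−2)/(2(n−1)))·|W|·|S|²`. -/
theorem huisken_estimate
    (n : ℕ) (hn : 4 ≤ n)
    (W : Fin n → Fin n → Fin n → Fin n → ℝ)
    (S : Fin n → Fin n → ℝ)
    (hW1 : ∀ i j k l, W i j k l = - W j i k l)
    (hW2 : ∀ i j k l, W i j k l = - W i j l k)
    (hW3 : ∀ i j k l, W i j k l = W k l i j)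
    (hWB : ∀ i j k l, W i j k l + W i k l j + W i l j k = 0)
    (hWtr : ∀ k l, ∑ i, W i k i l = 0)
    (hSsymm : ∀ i j, S i j = S j i)
    (hStr : ∑ i, S i i = 0) :
    |∑ i, ∑ j, ∑ k, ∑ l, W i j k l * S i k * S j l|
      ≤ Real.sqrt ((n - 2 : ℝ) / (2 * (n - 1)))
          * Real.sqrt (∑ i, ∑ j, ∑ k, ∑ l, (W i j k l) ^ 2)
          * ∑ i, ∑ j, (S i j) ^ 2 := by
  classical
  have hN4 : (4:ℝ) ≤ (n:ℝ) := by exact_mod_cast hn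
  have hn2' : (0:ℝ) < (n:ℝ) - 2 := by linarith
  have hn1' : (0:ℝ) < (n:ℝ) - 1 := by linarith
  have hn2 : ((n:ℝ) - 2) ≠ 0 := ne_of_gt hn2'
  have hn1 : ((n:ℝ) - 1) ≠ 0 := ne_of_gt hn1'
  -- abbreviations
  set A : ℝ := 1/((n:ℝ)-2) with hA
  set B : ℝ := (∑ i, ∑ j, S i j * S i j)/(((n:ℝ)-1)*((n:ℝ)-2)) with hB
  obtain ⟨σ, hσ⟩ : ∃ x : ℝ, ∑ i, ∑ j, S i j * S i j = x := ⟨_, rfl⟩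
  obtain ⟨t, ht⟩ : ∃ x : ℝ, ∑ i, ∑ k, Csq S i k * Csq S i k = x := ⟨_, rfl⟩
  obtain ⟨P, hP⟩ : ∃ x : ℝ, ∑ i, ∑ j, ∑ k, ∑ l, W i j k l * S i k * S j l = x := ⟨_, rfl⟩
  obtain ⟨w2, hw2⟩ : ∃ x : ℝ, ∑ i, ∑ j, ∑ k, ∑ l, (W i j k l)^2 = x := ⟨_, rfl⟩
  have hσpow : ∑ i, ∑ j, (S i j)^2 = σ := by
    rw [← hσ]
    exact Finset.sum_congr rfl fun i _ => Finset.sum_congr rfl fun j _ => by rw [pow_two]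
  have hσnn : 0 ≤ σ := by
    rw [← hσpow]
    exact Finset.sum_nonneg fun i _ => Finset.sum_nonneg fun j _ => sq_nonneg _
  have hw2nn : 0 ≤ w2 := by
    rw [← hw2]
    refine Finset.sum_nonneg fun i _ => Finset.sum_nonneg fun j _ =>
      Finset.sum_nonneg fun k _ => Finset.sum_nonneg fun l _ => sq_nonneg _
  -- ⟨W, V⟩ = 2 P
  have hWV : ∑ i, ∑ j, ∑ k, ∑ l, W i j k l * Vt S A B i j k l = 2 * P := by
    have hpt : ∀ i j k l, W i j k l * Vt S A B i j k l
        = W i j k l * (S i k * S j l - S i l * S j k)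
          + A * (W i j k l * KT (Csq S) i j k l)
          - B * (W i j k l * GT n i j k l) := by
      intro i j k l; simp only [Vt]; ring
    rw [sum4_congr hpt]
    simp only [Finset.sum_add_distrib, Finset.sum_sub_distrib, ← Finset.mul_sum]
    rw [contract_KT W hW1 hW2 hW3 hWtr (Csq S), contract_GT W hW2 hWtr,
      WU W S hW2, hP]
    ring
  -- V is Ricci-free, with the symmetries of a curvature tensor
  have hVric : ∀ k l, ∑ i, Vt S A B i k i l = 0 := by
    intro k l
    have := Vt_ricci hn S hSsymm hStr k l
    rw [← hA, ← hB] at this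
    exact this
  -- |V|² = ⟨V, U⟩
  have hVK : ∑ i, ∑ j, ∑ k, ∑ l, Vt S A B i j k l * KT (Csq S) i j k l = 0 :=
    contract_KT (Vt S A B) (Vt1 S A B) (Vt2 S A B) (Vt3 S hSsymm A B) hVric (Csq S)
  have hVG : ∑ i, ∑ j, ∑ k, ∑ l, Vt S A B i j k l * GT n i j k l = 0 :=
    contract_GT (Vt S A B) (Vt2 S A B) hVric
  have hVU : ∑ i, ∑ j, ∑ k, ∑ l,
      Vt S A B i j k l * (S i k * S j l - S i l * S j k)
      = 2*σ*σ - 2*t + A * (-4*t) - B * (-2*σ) := by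
    have hpt : ∀ i j k l, Vt S A B i j k l * (S i k * S j l - S i l * S j k)
        = (S i k * S j l - S i l * S j k) * (S i k * S j l - S i l * S j k)
          + A * ((S i k * S j l - S i l * S j k) * KT (Csq S) i j k l)
          - B * ((S i k * S j l - S i l * S j k) * GT n i j k l) := by
      intro i j k l; simp only [Vt]; ring
    rw [sum4_congr hpt]
    simp only [Finset.sum_add_distrib, Finset.sum_sub_distrib, ← Finset.mul_sum]
    rw [UU S hSsymm, KU S hSsymm hStr, GU S hSsymm hStr, trCsq S hSsymm, hσ, ht]
  have hVV : ∑ i, ∑ j, ∑ k, ∑ l, (Vt S A B i j k l)^2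
      = 2*σ*σ - 2*t + A * (-4*t) - B * (-2*σ) := by
    have hpt : ∀ i j k l, (Vt S A B i j k l)^2
        = Vt S A B i j k l * (S i k * S j l - S i l * S j k)
          + A * (Vt S A B i j k l * KT (Csq S) i j k l)
          - B * (Vt S A B i j k l * GT n i j k l) := by
      intro i j k l
      have : Vt S A B i j k l * Vt S A B i j k l
          = Vt S A B i j k l * (S i k * S j l - S i l * S j k)
            + A * (Vt S A B i j k l * KT (Csq S) i j k l)
            - B * (Vt S A B i j k l * GT n i j k l) := by
        conv_lhs => rw [show Vt S A B i j k l * Vt S A B i j k l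
          = Vt S A B i j k l * ((S i k * S j l - S i l * S j k)
            + A * KT (Csq S) i j k l - B * GT n i j k l) from by simp only [Vt]]
        ring
      rw [pow_two]; exact this
    rw [sum4_congr hpt]
    simp only [Finset.sum_add_distrib, Finset.sum_sub_distrib, ← Finset.mul_sum]
    rw [hVK, hVG, hVU]
    ring
  -- σ² ≤ n t
  have hσt : σ^2 ≤ (n:ℝ) * t := by
    have e1 : (∑ i, Csq S i i)^2 ≤ (n:ℝ) * ∑ i, (Csq S i i)^2 := by
      have := sq_sum_le_card_mul_sum_sq (s := (univ : Finset (Fin n)))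
        (f := fun i => Csq S i i)
      simpa using this
    have e2 : ∑ i, (Csq S i i)^2 ≤ ∑ i, ∑ k, (Csq S i k)^2 :=
      Finset.sum_le_sum fun i _ =>
        Finset.single_le_sum (f := fun k => (Csq S i k)^2)
          (fun k _ => sq_nonneg _) (Finset.mem_univ i)
    have e3 : ∑ i, ∑ k, (Csq S i k)^2 = t := by
      rw [← ht]
      exact Finset.sum_congr rfl fun i _ => Finset.sum_congr rfl fun k _ => by rw [pow_two]
    have e4 : ∑ i, Csq S i i = σ := by rw [trCsq S hSsymm, hσ]
    calc σ^2 = (∑ i, Csq S i i)^2 := by rw [e4]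
      _ ≤ (n:ℝ) * ∑ i, (Csq S i i)^2 := e1
      _ ≤ (n:ℝ) * t := by
          rw [← e3]
          exact mul_le_mul_of_nonneg_left e2 (by positivity)
  have htnn : 0 ≤ t := by
    rw [← ht]
    refine Finset.sum_nonneg fun i _ => Finset.sum_nonneg fun k _ => mul_self_nonneg _
  -- |V|² ≤ 2 (n-2)/(n-1) σ²
  have hbound : ∑ i, ∑ j, ∑ k, ∑ l, (Vt S A B i j k l)^2
      ≤ 2*((n:ℝ)-2)/((n:ℝ)-1)*σ^2 := by
    rw [hVV, hA, hB, hσ]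
    have id1 : 2*((n:ℝ)-2)/((n:ℝ)-1)*σ^2
        - (2*σ*σ - 2*t + (1/((n:ℝ)-2)) * (-4*t) - (σ/(((n:ℝ)-1)*((n:ℝ)-2))) * (-2*σ))
        = (2/((n:ℝ)-2))*((n:ℝ)*t - σ^2) := by
      field_simp
      ring
    have pos : 0 ≤ (2/((n:ℝ)-2))*((n:ℝ)*t - σ^2) :=
      mul_nonneg (div_nonneg (by norm_num) (le_of_lt hn2')) (by linarith)
    linarith
  -- Cauchy–Schwarz
  have cs := Finset.sum_mul_sq_le_sq_mul_sq (univ : Finset (Fin n × Fin n × Fin n × Fin n))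
    (fun p => W p.1 p.2.1 p.2.2.1 p.2.2.2) (fun p => Vt S A B p.1 p.2.1 p.2.2.1 p.2.2.2)
  rw [prod_sum_eq (fun i j k l => W i j k l * Vt S A B i j k l),
    prod_sum_eq (fun i j k l => (W i j k l)^2),
    prod_sum_eq (fun i j k l => (Vt S A B i j k l)^2)] at cs
  rw [hWV, hw2] at cs
  have hfin : (2*P)^2 ≤ w2 * (2*((n:ℝ)-2)/((n:ℝ)-1)*σ^2) :=
    le_trans cs (mul_le_mul_of_nonneg_left hbound hw2nn)
  have hPsq : P^2 ≤ ((n:ℝ)-2)/(2*((n:ℝ)-1)) * w2 * σ^2 := by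
    have e : ((n:ℝ)-2)/(2*((n:ℝ)-1)) * w2 * σ^2
        = (w2 * (2*((n:ℝ)-2)/((n:ℝ)-1)*σ^2))/4 := by
      field_simp
      ring
    nlinarith [hfin]
  have hc : 0 ≤ ((n:ℝ)-2)/(2*((n:ℝ)-1)) := div_nonneg (by linarith) (by linarith)
  rw [hP, hσpow, hw2]
  calc |P| = Real.sqrt (P^2) := (Real.sqrt_sq_eq_abs P).symm
    _ ≤ Real.sqrt (((n:ℝ)-2)/(2*((n:ℝ)-1)) * w2 * σ^2) := Real.sqrt_le_sqrt hPsq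
    _ = Real.sqrt (((n:ℝ)-2)/(2*((n:ℝ)-1))) * Real.sqrt w2 * σ := by
        rw [Real.sqrt_mul (mul_nonneg hc hw2nn) (σ^2), Real.sqrt_sq hσnn,
          Real.sqrt_mul hc w2]
end
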